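/- (Classification of rank-2 charge-conserving braid solutions.) Let R be an invertible charge-conserving matrix in Matrix (Fin 2 × Fin 2) (Fin 2 × Fin 2) ℂ, and write α₁ = R (1,1) (1,1), α₂ = R (2,2) (2,2), a = R (2,1) (2,1), b = R (2,1) (1,2), c = R (1,2) (2,1), d = R (1,2) (1,2). Then R satisfies the braid relation R₁ * R₂ * R₁ = R₂ * R₁ * R₂ if and only if at least one of the following holds: (1) R = α₁ • 1; (2) a = 0 and d = 0; (3) d = 0, b*c = -α₁*(a - α₁), and (α₂ = α₁ or α₂ = a - α₁); (4) a = 0, b*c = -α₁*(d - α₁), and (α₂ = α₁ or α₂ = d - α₁). -/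

import Mathlib

open Matrix

noncomputable section

/-- The width-3 matrix `M₁ = M ⊗ 1`. -/
def Lone {N : ℕ} (M : Matrix (Fin N × Fin N) (Fin N × Fin N) ℂ) :
    Matrix (Fin N × Fin N × Fin N) (Fin N × Fin N × Fin N) ℂ :=
  Matrix.of fun p q =>
    M (p.1, p.2.1) (q.1, q.2.1) * (if p.2.2 = q.2.2 then (1 : ℂ) else 0)

/-- The width-3 matrix `M₂ = 1 ⊗ M`. -/
def Ltwo {N : ℕ} (M : Matrix (Fin N × Fin N) (Fin N × Fin N) ℂ) :
    Matrix (Fin N × Fin N × Fin N) (Fin N × Fin N × Fin N) ℂ :=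
  Matrix.of fun p q =>
    (if p.1 = q.1 then (1 : ℂ) else 0) * M (p.2.1, p.2.2) (q.2.1, q.2.2)

/-- The pair (S,R) satisfies the loop braid relations. -/
def LoopBraid {N : ℕ} (S R : Matrix (Fin N × Fin N) (Fin N × Fin N) ℂ) : Prop :=
  S * S = 1 ∧
  Lone S * Ltwo S * Lone S = Ltwo S * Lone S * Ltwo S ∧
  Lone R * Ltwo R * Lone R = Ltwo R * Lone R * Ltwo R ∧
  Lone R * Ltwo R * Lone S = Ltwo S * Lone R * Ltwo R ∧
  Lone R * Ltwo S * Lone S = Ltwo S * Lone S * Ltwo R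

/-- A width-2 rank-N matrix is charge-conserving. -/
def ChargeConserving {N : ℕ} (M : Matrix (Fin N × Fin N) (Fin N × Fin N) ℂ) : Prop :=
  ∀ k l i j : Fin N, M (k, l) (i, j) ≠ 0 → ((k, l) = (i, j) ∨ (k, l) = (j, i))

/-- The element of `Fin 2` labelled `1`. -/
def e1 : Fin 2 := 0
/-- The element of `Fin 2` labelled `2`. -/
def e2 : Fin 2 := 1

/-!
Charge conservation leaves only six possibly nonzero entries
`α₁ = R₁₁¹¹, α₂ = R₂₂²², a = R₂₁²¹, b = R₂₁¹², c = R₁₂²¹, d = R₁₂¹²`, and makes `R₁R₂R₁` and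
`R₂R₁R₂` block diagonal along the words of fixed letter content. The blocks of words with three
equal letters agree trivially; the two `3 × 3` blocks of words `112, 121, 211` and `122, 212, 221`
give eighteen cubic equations, which collapse to seven. Invertibility makes `α₁, α₂` nonzero, and
splitting according to whether `a` and `d` vanish solves the seven equations: if both are nonzero
then `R` is scalar; if one of them vanishes, `bc` is fixed by the other and `α₂` is one of the two
roots `t` of `t (x - t) = bc` for `x` the nonvanishing one.
-/

namespace ChargeConserving

variable {N : ℕ} {M : Matrix (Fin N × Fin N) (Fin N × Fin N) ℂ}

theorem apply_eq_zero (hM : ChargeConserving M) {k l i j : Fin N} (h₁ : (k, l) ≠ (i, j))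
    (h₂ : (k, l) ≠ (j, i)) : M (k, l) (i, j) = 0 := by
  by_contra h
  exact (hM k l i j h).elim h₁ h₂

theorem apply_diag_ne_zero (hM : ChargeConserving M) (hu : IsUnit M) (i : Fin N) :
    M (i, i) (i, i) ≠ 0 := by
  intro h
  have hrow : ∀ q, M (i, i) q = 0 := by
    rintro ⟨k, l⟩
    by_cases hkl : (i, i) = (k, l)
    · rwa [← hkl]
    · exact hM.apply_eq_zero hkl (by grind)
  have hdet : M.det = 0 := Matrix.det_eq_zero_of_row_eq_zero _ hrow
  exact not_isUnit_zero (hdet ▸ (Matrix.isUnit_iff_isUnit_det M).mp hu)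

end ChargeConserving

def BraidEquations (α₁ α₂ a b c d : ℂ) : Prop :=
  a * b * d = 0 ∧ a * c * d = 0 ∧ a * d * (d - a) = 0 ∧
  a * (b * c + α₁ * a - α₁ ^ 2) = 0 ∧ a * (b * c + α₂ * a - α₂ ^ 2) = 0 ∧
  d * (b * c + α₁ * d - α₁ ^ 2) = 0 ∧ d * (b * c + α₂ * d - α₂ ^ 2) = 0

theorem eq_or_eq_sub_of_quadratic {s x α β : ℂ} (hα : s + α * x - α ^ 2 = 0)
    (hβ : s + β * x - β ^ 2 = 0) : β = α ∨ β = x - α := by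
  have h : (β - α) * (β - (x - α)) = 0 := by linear_combination hα - hβ
  rcases mul_eq_zero.mp h with h | h
  · exact Or.inl (sub_eq_zero.mp h)
  · exact Or.inr (sub_eq_zero.mp h)

theorem braidEquations_iff {α₁ α₂ a b c d : ℂ} (h₁ : α₁ ≠ 0) (h₂ : α₂ ≠ 0) :
    BraidEquations α₁ α₂ a b c d ↔
      (a = α₁ ∧ d = α₁ ∧ α₂ = α₁ ∧ b = 0 ∧ c = 0) ∨ (a = 0 ∧ d = 0) ∨
      (d = 0 ∧ b * c = -α₁ * (a - α₁) ∧ (α₂ = α₁ ∨ α₂ = a - α₁)) ∨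
      (a = 0 ∧ b * c = -α₁ * (d - α₁) ∧ (α₂ = α₁ ∨ α₂ = d - α₁)) := by
  constructor
  · rintro ⟨hb, hc, had, ha₁, ha₂, hd₁, hd₂⟩
    rcases eq_or_ne a 0 with rfl | ha <;> rcases eq_or_ne d 0 with rfl | hd
    · exact Or.inr (Or.inl ⟨rfl, rfl⟩)
    · replace hd₁ := (mul_eq_zero.mp hd₁).resolve_left hd
      replace hd₂ := (mul_eq_zero.mp hd₂).resolve_left hd
      exact Or.inr (Or.inr (Or.inr ⟨rfl, by linear_combination hd₁,
        eq_or_eq_sub_of_quadratic hd₁ hd₂⟩))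
    · replace ha₁ := (mul_eq_zero.mp ha₁).resolve_left ha
      replace ha₂ := (mul_eq_zero.mp ha₂).resolve_left ha
      exact Or.inr (Or.inr (Or.inl ⟨rfl, by linear_combination ha₁,
        eq_or_eq_sub_of_quadratic ha₁ ha₂⟩))
    · obtain rfl : b = 0 := by simpa [ha, hd] using hb
      obtain rfl : c = 0 := by simpa [ha, hd] using hc
      obtain rfl : a = d := by simpa [ha, hd, sub_eq_zero, eq_comm] using had
      -- with `bc = 0`, a nonzero root `t` of `t (a - t) = 0` equals `a`
      have hα (α : ℂ) (hne : α ≠ 0) (h : a * (0 * 0 + α * a - α ^ 2) = 0) : a = α := by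
        have h' : α * (a - α) = 0 := by linear_combination (mul_eq_zero.mp h).resolve_left ha
        exact sub_eq_zero.mp ((mul_eq_zero.mp h').resolve_left hne)
      obtain rfl := hα α₁ h₁ ha₁
      exact Or.inl ⟨rfl, rfl, (hα α₂ h₂ ha₂).symm, rfl, rfl⟩
  · rintro (⟨rfl, rfl, rfl, rfl, rfl⟩ | ⟨rfl, rfl⟩ | ⟨rfl, hbc, rfl | rfl⟩ | ⟨rfl, hbc, rfl | rfl⟩) <;>
      refine ⟨?_, ?_, ?_, ?_, ?_, ?_, ?_⟩ <;>
      first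
        | ring1
        | linear_combination a * hbc
        | linear_combination d * hbc

namespace ChargeConserving

variable {R : Matrix (Fin 2 × Fin 2) (Fin 2 × Fin 2) ℂ}

theorem eq_smul_one_iff (hR : ChargeConserving R) :
    R = R (0, 0) (0, 0) • 1 ↔
      R (1, 0) (1, 0) = R (0, 0) (0, 0) ∧ R (0, 1) (0, 1) = R (0, 0) (0, 0) ∧
        R (1, 1) (1, 1) = R (0, 0) (0, 0) ∧ R (1, 0) (0, 1) = 0 ∧ R (0, 1) (1, 0) = 0 := by
  rw [← Matrix.ext_iff]
  simp only [Prod.forall, Fin.forall_fin_two, Matrix.smul_apply, Matrix.one_apply, Prod.mk.injEq,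
    one_ne_zero, zero_ne_one, and_true, and_false, true_and, if_true, if_false, and_self,
    ne_eq, not_false_eq_true, hR.apply_eq_zero, smul_eq_mul, mul_one, mul_zero]
  tauto

theorem braid_iff (hR : ChargeConserving R) :
    Lone R * Ltwo R * Lone R = Ltwo R * Lone R * Ltwo R ↔
      BraidEquations (R (0, 0) (0, 0)) (R (1, 1) (1, 1)) (R (1, 0) (1, 0)) (R (1, 0) (0, 1))
        (R (0, 1) (1, 0)) (R (0, 1) (0, 1)) := by
  rw [← Matrix.ext_iff]
  simp only [Prod.forall, Fin.forall_fin_two, Matrix.mul_apply, Lone, Ltwo, Matrix.of_apply,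
    Fintype.sum_prod_type, Fin.sum_univ_two, Prod.mk.injEq, one_ne_zero, zero_ne_one, and_true,
    and_false, true_and, false_and, if_true, if_false, and_self, and_assoc, ne_eq,
    not_false_eq_true, hR.apply_eq_zero, mul_one, mul_zero, zero_mul, one_mul, add_zero, zero_add]
  constructor
  · rintro ⟨h₁, h₂, -, h₄, h₅, -, h₇, -, -, -, -, h₁₂, -, -, -, -, -, h₁₈⟩
    exact ⟨by linear_combination -h₄, by linear_combination -h₂, by linear_combination h₅,
      by linear_combination h₁₂, by linear_combination -h₁₈, by linear_combination -h₁,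
      by linear_combination h₇⟩
  · rintro ⟨e₁, e₂, e₃, e₄, e₅, e₆, e₇⟩
    exact ⟨by linear_combination -e₆, by linear_combination -e₂, by ring, by linear_combination -e₁,
      by linear_combination e₃, by linear_combination e₂, by linear_combination e₇,
      by linear_combination e₂, by ring, by ring, by linear_combination e₁, by linear_combination e₄,
      by linear_combination e₁, by linear_combination -e₃, by linear_combination -e₂, by ring,
      by linear_combination -e₁, by linear_combination -e₅⟩

end ChargeConserving

theorem stmt18 (R : Matrix (Fin 2 × Fin 2) (Fin 2 × Fin 2) ℂ)
    (hinv : IsUnit R) (hcc : ChargeConserving R) :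
    Lone R * Ltwo R * Lone R = Ltwo R * Lone R * Ltwo R ↔
      (R = R (e1, e1) (e1, e1) • (1 : Matrix (Fin 2 × Fin 2) (Fin 2 × Fin 2) ℂ) ∨
       (R (e2, e1) (e2, e1) = 0 ∧ R (e1, e2) (e1, e2) = 0) ∨
       (R (e1, e2) (e1, e2) = 0 ∧
        R (e2, e1) (e1, e2) * R (e1, e2) (e2, e1) =
          -(R (e1, e1) (e1, e1)) * (R (e2, e1) (e2, e1) - R (e1, e1) (e1, e1)) ∧
        (R (e2, e2) (e2, e2) = R (e1, e1) (e1, e1) ∨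
         R (e2, e2) (e2, e2) = R (e2, e1) (e2, e1) - R (e1, e1) (e1, e1))) ∨
       (R (e2, e1) (e2, e1) = 0 ∧
        R (e2, e1) (e1, e2) * R (e1, e2) (e2, e1) =
          -(R (e1, e1) (e1, e1)) * (R (e1, e2) (e1, e2) - R (e1, e1) (e1, e1)) ∧
        (R (e2, e2) (e2, e2) = R (e1, e1) (e1, e1) ∨
         R (e2, e2) (e2, e2) = R (e1, e2) (e1, e2) - R (e1, e1) (e1, e1)))) := by
  simp only [e1, e2]
  rw [hcc.braid_iff, braidEquations_iff (hcc.apply_diag_ne_zero hinv 0)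
    (hcc.apply_diag_ne_zero hinv 1), hcc.eq_smul_one_iff]
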